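/- Completely uncorrelated codes (Remark 1, zero-shift part generalized): in the construction of Theorem 1, if s = α^s p^r + δ and t = α^t p^r + δ with the same δ and α^s ≠ α^t, then for every integer shift τ with |τ| < p^{n+r}, the aperiodic cross-correlation sum ∑_{β=0}^{p-1} C_{χ(F_β^s), χ(F_β^t)}(τ) = 0. -/

import Mathlib

/-- `ζ_q^e` for an integer exponent `e`. -/
noncomputable def zeta (q : ℕ) (e : ℤ) : ℂ :=
  Complex.exp (2 * Real.pi * Complex.I * (e : ℂ) / (q : ℂ))

/-- the `i`-th base-`p` digit of `I`, for vectors of length `m`,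
under the identification `I = ∑_{i=0}^{m-1} p^{m-1-i} I_i`. -/
def dgt (p m i I : ℕ) : ℕ := I / p ^ (m - 1 - i) % p

/-- Aperiodic cross-correlation of sequences `a, b` of length `N` at integer shift `τ`. -/
noncomputable def accs (N : ℕ) (a b : ℕ → ℂ) (τ : ℤ) : ℂ :=
  if 0 ≤ τ ∧ τ < (N : ℤ) then
    ∑ i ∈ Finset.range (N - τ.toNat), a (i + τ.toNat) * (starRingEnd ℂ) (b i)
  else if -(N : ℤ) < τ ∧ τ < 0 then
    ∑ i ∈ Finset.range (N - (-τ).toNat), a i * (starRingEnd ℂ) (b (i + (-τ).toNat))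
  else 0

/-- The multi-variable function of Theorem 1 (single Hamiltonian path plus `r` isolated
vertices), evaluated at the integer `I ∈ [0, p^{n+r})` identified with its base-`p`
digit vector: `F_β^{αp^r+δ}(x) = (q/p)∑_{i=1}^{n-1} x_{π(i-1)}x_{π(i)} + ∑ γ_i x_i + θ
+ (q/p)(α x_{π(0)} + β x_{π(n-1)}) + (q/p)·δ·(x_n,…,x_{n+r-1})`. -/
def Fval (p q n r : ℕ) (hn : 2 ≤ n) (π : Equiv.Perm (Fin n)) (γ : Fin n → ℕ) (θ : ℕ)
    (α β δ I : ℕ) : ℤ :=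
  ((q / p : ℕ) : ℤ) *
    (∑ i : Fin n, if h : 1 ≤ (i : ℕ) then
        (dgt p (n + r) (π ⟨(i : ℕ) - 1, by omega⟩) I : ℤ) * (dgt p (n + r) (π i) I : ℤ)
      else 0)
  + ∑ i : Fin n, (γ i : ℤ) * (dgt p (n + r) i I : ℤ) + (θ : ℤ)
  + ((q / p : ℕ) : ℤ) *
      ((α : ℤ) * (dgt p (n + r) (π ⟨0, by omega⟩) I : ℤ) +
       (β : ℤ) * (dgt p (n + r) (π ⟨n - 1, by omega⟩) I : ℤ))
  + ((q / p : ℕ) : ℤ) *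
      ∑ j ∈ Finset.range r, (dgt p r j δ : ℤ) * (dgt p (n + r) (n + j) I : ℤ)

/-!
Summing over `β` removes every pair `(i + t, i)` whose digits at the last path vertex
`π (n - 1)` differ, since `β` enters `F` only through `(q/p) β x_{π(n-1)}`. For the remaining
pairs, regard `α` as the value of a virtual vertex in front of `π 0` and let `K < n` be the last
position of this extended path at which the digit vectors of `i + t` and `i` differ. The digits
at the next vertex `π K` agree, so that digit can be set to any `c` in `i` and in `i + t`
simultaneously: the shift `t`, the position `K` and all other digits are unchanged, and the
exponent of `ζ_q` moves by `(q/p) c e` with `e ≢ 0 (mod p)` the difference at `K`. Summing over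
`c` gives a full sum of `p`-th roots of unity, hence zero. Negative shifts follow from
`C_{a,b}(-τ) = conj C_{b,a}(τ)`.
-/

open Finset

lemma zeta_add (q : ℕ) (a b : ℤ) : zeta q (a + b) = zeta q a * zeta q b := by
  rw [zeta, zeta, zeta, ← Complex.exp_add]
  push_cast
  ring_nf

lemma conj_zeta (q : ℕ) (a : ℤ) : starRingEnd ℂ (zeta q a) = zeta q (-a) := by
  rw [zeta, zeta, ← Complex.exp_conj]
  simp only [map_div₀, map_mul, Complex.conj_I, Complex.conj_ofReal, map_ofNat,
    Complex.conj_natCast, map_intCast, Int.cast_neg]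
  ring_nf

lemma zeta_div_mul {p q : ℕ} (hq : q ≠ 0) (hpq : p ∣ q) (x : ℤ) :
    zeta q ((q / p : ℕ) * x) = zeta p x := by
  obtain ⟨k, rfl⟩ := hpq
  have hp : p ≠ 0 := left_ne_zero_of_mul hq
  have hk : k ≠ 0 := right_ne_zero_of_mul hq
  rw [Nat.mul_div_cancel_left k (Nat.pos_of_ne_zero hp), zeta, zeta]
  congr 1
  push_cast
  field_simp

lemma zeta_eq_zpow (p : ℕ) (e : ℤ) :
    zeta p e = Complex.exp (2 * Real.pi * Complex.I / p) ^ e := by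
  rw [zeta, ← Complex.exp_int_mul]
  ring_nf

lemma sum_range_zeta_mul {p : ℕ} (hp : p ≠ 0) (e : ℤ) :
    ∑ c ∈ range p, zeta p (c * e) = if (p : ℤ) ∣ e then (p : ℂ) else 0 := by
  set ζ := Complex.exp (2 * Real.pi * Complex.I / p)
  have hζ : IsPrimitiveRoot ζ p := Complex.isPrimitiveRoot_exp p hp
  have hpow (c : ℕ) : zeta p (c * e) = (ζ ^ e) ^ c := by
    rw [zeta_eq_zpow, mul_comm (c : ℤ), zpow_mul, zpow_natCast]
  simp only [hpow]
  split_ifs with he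
  · simp [(hζ.zpow_eq_one_iff_dvd e).mpr he]
  · have hne : ζ ^ e ≠ 1 := fun h => he ((hζ.zpow_eq_one_iff_dvd e).mp h)
    rw [geom_sum_eq hne, ← zpow_natCast, ← zpow_mul, mul_comm, zpow_mul, zpow_natCast,
      hζ.pow_eq_one, one_zpow, sub_self, zero_div]

lemma dvd_sub_iff_eq {P v w : ℤ} (hv : v ∈ Set.Ico 0 P) (hw : w ∈ Set.Ico 0 P) :
    P ∣ v - w ↔ v = w :=
  ⟨fun h => sub_eq_zero.mp (Int.eq_zero_of_abs_lt_dvd h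
    (abs_sub_lt_of_nonneg_of_lt hv.1 hv.2 hw.1 hw.2)), fun h => by simp [h]⟩

lemma sum_range_zeta_add_mul_eq_zero {p q : ℕ} (hq : q ≠ 0) (hpq : p ∣ q) {E : ℤ}
    (hE : ¬ (p : ℤ) ∣ E) (D : ℤ) :
    ∑ c ∈ range p, zeta q (D + (q / p : ℕ) * (c * E)) = 0 := by
  have hp : p ≠ 0 := by rintro rfl; exact hq (zero_dvd_iff.mp hpq)
  simp only [zeta_add, zeta_div_mul hq hpq]
  rw [← mul_sum, sum_range_zeta_mul hp, if_neg hE, mul_zero]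

lemma accs_of_nonneg (N : ℕ) (a b : ℕ → ℂ) {τ : ℤ} (hτ : 0 ≤ τ) :
    accs N a b τ = ∑ i ∈ range (N - τ.toNat), a (i + τ.toNat) * starRingEnd ℂ (b i) := by
  by_cases hτN : τ < N
  · rw [accs, if_pos ⟨hτ, hτN⟩]
  · rw [accs, if_neg (by omega), if_neg (by omega), Nat.sub_eq_zero_of_le (by omega),
      sum_range_zero]

lemma accs_neg (N : ℕ) (a b : ℕ → ℂ) {τ : ℤ} (hτ : 0 < τ) :
    accs N a b (-τ) = starRingEnd ℂ (accs N b a τ) := by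
  rw [accs, if_neg (by omega), accs_of_nonneg N b a hτ.le, neg_neg, map_sum]
  split_ifs with h
  · exact sum_congr rfl fun i _ => by rw [map_mul, Complex.conj_conj, mul_comm]
  · rw [Nat.sub_eq_zero_of_le (by omega), sum_range_zero]

def setDigit (p e c I : ℕ) : ℕ := p ^ (e + 1) * (I / p ^ (e + 1)) + c * p ^ e + I % p ^ e

lemma div_pow_mod_eq_of_mod_eq {p e e' X Y : ℕ} (he : e' < e) (h : X % p ^ e = Y % p ^ e) :
    X / p ^ e' % p = Y / p ^ e' % p := by
  have key (Z : ℕ) : Z / p ^ e' % p = Z % p ^ e % p ^ (e' + 1) / p ^ e' := by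
    rw [Nat.mod_mod_of_dvd _ (pow_dvd_pow p he), pow_succ, Nat.mod_mul_right_div_self]
  rw [key X, key Y, h]

lemma div_pow_mod_eq_of_div_eq {p e e' X Y : ℕ} (he : e < e')
    (h : X / p ^ (e + 1) = Y / p ^ (e + 1)) : X / p ^ e' % p = Y / p ^ e' % p := by
  have key (Z : ℕ) : Z / p ^ e' = Z / p ^ (e + 1) / p ^ (e' - (e + 1)) := by
    rw [Nat.div_div_eq_div_mul, ← pow_add, Nat.add_sub_cancel' he]
  rw [key X, key Y, h]

section setDigit

variable {p e c I : ℕ}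

lemma setDigit_eq : setDigit p e c I = p ^ e * (p * (I / p ^ (e + 1)) + c) + I % p ^ e := by
  rw [setDigit, pow_succ]
  ring

lemma setDigit_add_mul :
    setDigit p e c I + I / p ^ e % p * p ^ e = I + c * p ^ e := by
  have h := Nat.div_add_mod I (p ^ (e + 1))
  rw [Nat.mod_pow_succ] at h
  rw [setDigit]
  linarith [mul_comm (I / p ^ e % p) (p ^ e)]

lemma setDigit_self : setDigit p e (I / p ^ e % p) I = I := by
  have := setDigit_add_mul (p := p) (c := I / p ^ e % p) (I := I) (e := e)
  omega

lemma setDigit_mod_pow : setDigit p e c I % p ^ e = I % p ^ e := by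
  rw [setDigit_eq, Nat.mul_add_mod, Nat.mod_mod]

lemma setDigit_div_pow (hp : 0 < p) :
    setDigit p e c I / p ^ e = p * (I / p ^ (e + 1)) + c := by
  have hpe : 0 < p ^ e := pow_pos hp e
  rw [setDigit_eq, Nat.mul_add_div hpe, Nat.div_eq_of_lt (Nat.mod_lt _ hpe), add_zero]

lemma setDigit_div_pow_succ (hp : 0 < p) (hc : c < p) :
    setDigit p e c I / p ^ (e + 1) = I / p ^ (e + 1) := by
  rw [pow_succ, ← Nat.div_div_eq_div_mul, setDigit_div_pow hp, Nat.mul_add_div hp,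
    Nat.div_eq_of_lt hc, add_zero, pow_succ]

lemma div_pow_mod_setDigit (hp : 0 < p) (hc : c < p) (e' : ℕ) :
    setDigit p e c I / p ^ e' % p = if e' = e then c else I / p ^ e' % p := by
  rcases lt_trichotomy e' e with he | rfl | he
  · rw [if_neg he.ne, div_pow_mod_eq_of_mod_eq he setDigit_mod_pow]
  · rw [if_pos rfl, setDigit_div_pow hp, Nat.mul_add_mod, Nat.mod_eq_of_lt hc]
  · rw [if_neg he.ne', div_pow_mod_eq_of_div_eq he (setDigit_div_pow_succ hp hc)]

lemma setDigit_setDigit (hp : 0 < p) (hc : c < p) (c' : ℕ) :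
    setDigit p e c' (setDigit p e c I) = setDigit p e c' I := by
  rw [setDigit, setDigit_div_pow_succ hp hc, setDigit_mod_pow, setDigit]

lemma setDigit_add {t : ℕ} (h : (I + t) / p ^ e % p = I / p ^ e % p) :
    setDigit p e c (I + t) = setDigit p e c I + t := by
  have h₁ := setDigit_add_mul (p := p) (c := c) (I := I + t) (e := e)
  have h₂ := setDigit_add_mul (p := p) (c := c) (I := I) (e := e)
  rw [h] at h₁
  omega

lemma setDigit_lt_pow (hp : 0 < p) (hc : c < p) {m : ℕ} (hI : I < p ^ m) (he : e < m) :
    setDigit p e c I < p ^ m := by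
  have hm : p ^ m = p ^ (m - (e + 1)) * p ^ (e + 1) := by
    rw [← pow_add, Nat.sub_add_cancel he]
  rw [hm] at hI ⊢
  rw [← Nat.div_lt_iff_lt_mul (pow_pos hp _), setDigit_div_pow_succ hp hc]
  exact (Nat.div_lt_iff_lt_mul (pow_pos hp _)).mpr hI

end setDigit

lemma sum_eq_sum_sum_setDigit {M : Type*} [AddCommMonoid M] {p : ℕ} (hp : 0 < p)
    (s : Finset ℕ) (e : ℕ → ℕ)
    (hs : ∀ i ∈ s, ∀ c < p, setDigit p (e i) c i ∈ s ∧ e (setDigit p (e i) c i) = e i)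
    (f : ℕ → M) :
    ∑ i ∈ s, f i =
      ∑ b ∈ s with b / p ^ e b % p = 0, ∑ c ∈ range p, f (setDigit p (e b) c b) := by
  rw [← sum_product']
  refine sum_nbij' (fun i => (setDigit p (e i) 0 i, i / p ^ e i % p))
    (fun x => setDigit p (e x.1) x.2 x.1) ?_ ?_ ?_ ?_ ?_
  · intro i hi
    obtain ⟨hmem, he⟩ := hs i hi 0 hp
    simp only [mem_product, mem_filter, mem_range]
    refine ⟨⟨hmem, ?_⟩, Nat.mod_lt _ hp⟩
    rw [he, div_pow_mod_setDigit hp hp, if_pos rfl]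
  · rintro ⟨b, c⟩ hx
    simp only [mem_product, mem_filter, mem_range] at hx
    exact (hs b hx.1.1 c hx.2).1
  · intro i hi
    simp only [(hs i hi 0 hp).2]
    rw [setDigit_setDigit hp hp, setDigit_self]
  · rintro ⟨b, c⟩ hx
    simp only [mem_product, mem_filter, mem_range] at hx
    obtain ⟨⟨hb, hb0⟩, hc⟩ := hx
    have hb' : setDigit p (e b) 0 b = b := by
      simpa only [hb0] using setDigit_self (p := p) (e := e b) (I := b)
    simp only [(hs b hb c hc).2]
    rw [setDigit_setDigit hp hc, hb', div_pow_mod_setDigit hp hc, if_pos rfl]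
  · intro i hi
    simp only [(hs i hi 0 hp).2]
    rw [setDigit_setDigit hp hp, setDigit_self]

/-- `dgt p m k` is junk for `k ≥ m`; zeroing it there makes `setDigit` act as `Function.update`
(`digitVec_setDigit`). -/
def digitVec (p m I : ℕ) : ℕ → ℤ := fun k => if k < m then (dgt p m k I : ℤ) else 0

lemma digitVec_setDigit {p m I c k : ℕ} (hp : 0 < p) (hc : c < p) (hk : k < m) :
    digitVec p m (setDigit p (m - 1 - k) c I) = Function.update (digitVec p m I) k c := by
  funext k'
  rw [Function.update_apply]
  by_cases hk' : k' < m
  · simp only [digitVec, dgt, if_pos hk', div_pow_mod_setDigit hp hc]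
    by_cases h : k' = k
    · simp [h]
    · simp [h, show m - 1 - k' ≠ m - 1 - k by omega]
  · simp [digitVec, hk', show k' ≠ k by omega]

lemma digitVec_mem_Ico {p : ℕ} (hp : 0 < p) (m I k : ℕ) :
    digitVec p m I k ∈ Set.Ico 0 (p : ℤ) := by
  unfold digitVec
  split_ifs
  · exact ⟨by positivity, by exact_mod_cast Nat.mod_lt _ hp⟩
  · exact ⟨le_rfl, by exact_mod_cast hp⟩

lemma update_sub_update_apply {α : Type*} [DecidableEq α] {x y : α → ℤ} {k : α}
    (hk : x k = y k) (c : ℤ) (j : α) :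
    Function.update x k c j - Function.update y k c j = x j - y j := by
  rcases eq_or_ne j k with rfl | hj
  · simp [hk]
  · simp [hj]

lemma sum_mul_update_sub_sum_mul_update {ι α : Type*} [DecidableEq α] {x y : α → ℤ} {k : α}
    (hk : x k = y k) (c : ℤ) (s : Finset ι) (w : ι → ℤ) (g : ι → α) :
    ∑ i ∈ s, w i * Function.update x k c (g i) - ∑ i ∈ s, w i * Function.update y k c (g i) =
      ∑ i ∈ s, w i * x (g i) - ∑ i ∈ s, w i * y (g i) := by
  simp only [← sum_sub_distrib, ← mul_sub, update_sub_update_apply hk]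

lemma sum_range_mul_succ_update_sub {n K : ℕ} {u u' : ℕ → ℤ} (hK : K < n)
    (h : ∀ j, K < j → j ≤ n → u j = u' j) (c : ℤ) :
    ∑ j ∈ range n, Function.update u (K + 1) c j * Function.update u (K + 1) c (j + 1) -
        ∑ j ∈ range n, Function.update u' (K + 1) c j * Function.update u' (K + 1) c (j + 1) =
      ∑ j ∈ range n, u j * u (j + 1) - ∑ j ∈ range n, u' j * u' (j + 1) +
        (c - u (K + 1)) * (u K - u' K) := by
  have hK1 := h (K + 1) (by omega) (by omega)
  have term : ∀ j ∈ range n,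
      (Function.update u (K + 1) c j * Function.update u (K + 1) c (j + 1) -
          Function.update u' (K + 1) c j * Function.update u' (K + 1) c (j + 1)) -
        (u j * u (j + 1) - u' j * u' (j + 1)) =
      if K = j then (c - u (K + 1)) * (u K - u' K) else 0 := by
    intro j hj
    rw [mem_range] at hj
    rcases lt_trichotomy j K with hjK | rfl | hjK
    · rw [if_neg hjK.ne', Function.update_of_ne (by omega), Function.update_of_ne (by omega),
        Function.update_of_ne (by omega), Function.update_of_ne (by omega)]
      ring
    · simp only [if_true, Function.update_self, Function.update_of_ne (Nat.succ_ne_self j).symm,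
        hK1]
      ring
    · simp only [Function.update_apply, h j hjK hj.le, h (j + 1) (by omega) hj, if_neg hjK.ne]
      ring
  have := sum_congr rfl term
  rw [sum_sub_distrib, sum_sub_distrib, sum_sub_distrib, sum_ite_eq, if_pos (mem_range.mpr hK)]
    at this
  linear_combination this

def pivot (n : ℕ) (u u' : ℕ → ℤ) : ℕ := Nat.findGreatest (fun j => u j ≠ u' j) n

section pivot

variable {n : ℕ} {u u' : ℕ → ℤ}

lemma pivot_le : pivot n u u' ≤ n := Nat.findGreatest_le n

lemma apply_pivot_ne (h₀ : u 0 ≠ u' 0) : u (pivot n u u') ≠ u' (pivot n u u') :=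
  Nat.findGreatest_spec (P := fun j => u j ≠ u' j) (Nat.zero_le n) h₀

lemma eq_of_pivot_lt {j : ℕ} (hj : pivot n u u' < j) (hjn : j ≤ n) : u j = u' j :=
  not_not.mp (Nat.findGreatest_is_greatest hj hjn)

lemma pivot_lt (h₀ : u 0 ≠ u' 0) (hn : u n = u' n) : pivot n u u' < n :=
  pivot_le.lt_of_ne fun h => apply_pivot_ne h₀ (h ▸ hn)

lemma pivot_update (hK : pivot n u u' < n) (c : ℤ) :
    pivot n (Function.update u (pivot n u u' + 1) c) (Function.update u' (pivot n u u' + 1) c) =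
      pivot n u u' := by
  have hP : (fun j => Function.update u (pivot n u u' + 1) c j ≠
      Function.update u' (pivot n u u' + 1) c j) = fun j => u j ≠ u' j := by
    funext j
    rcases eq_or_ne j (pivot n u u' + 1) with rfl | hj
    · simp [eq_of_pivot_lt (Nat.lt_succ_self _) hK]
    · simp [hj]
  show Nat.findGreatest _ n = pivot n u u'
  simp only [hP]
  rfl

end pivot

section path

variable {n : ℕ} (π : Equiv.Perm (Fin n))

def pathVertex (v : ℕ) : ℕ := if h : v < n then π ⟨v, h⟩ else v

/-- The values of `x` along the path `π`, preceded by `a`, so that the term `α x_{π(0)}` of `F`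
becomes the first edge of the path. -/
def pathSeq (a : ℤ) (x : ℕ → ℤ) : ℕ → ℤ
  | 0 => a
  | j + 1 => if j < n then x (pathVertex π j) else 0

variable {π}

lemma pathVertex_of_lt {v : ℕ} (hv : v < n) : pathVertex π v = π ⟨v, hv⟩ := dif_pos hv

lemma pathVertex_lt {v : ℕ} (hv : v < n) : pathVertex π v < n := by
  rw [pathVertex_of_lt hv]
  exact (π _).isLt

lemma eq_of_pathVertex_eq {v w : ℕ} (hv : v < n) (hw : w < n)
    (h : pathVertex π v = pathVertex π w) : v = w := by
  rw [pathVertex_of_lt hv, pathVertex_of_lt hw] at h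
  simpa using π.injective (Fin.ext h)

lemma pathSeq_succ_of_lt {a : ℤ} {x : ℕ → ℤ} {j : ℕ} (hj : j < n) :
    pathSeq π a x (j + 1) = x (pathVertex π j) := if_pos hj

lemma pathSeq_congr {a : ℤ} {x x' : ℕ → ℤ} (h : ∀ k < n, x k = x' k) :
    pathSeq π a x = pathSeq π a x' := by
  funext j
  cases j with
  | zero => rfl
  | succ j =>
    simp only [pathSeq]
    split_ifs with hj
    exacts [h _ (pathVertex_lt hj), rfl]

lemma pathSeq_update {a c : ℤ} {x : ℕ → ℤ} {K : ℕ} (hK : K < n) :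
    pathSeq π a (Function.update x (pathVertex π K) c) =
      Function.update (pathSeq π a x) (K + 1) c := by
  funext j
  cases j with
  | zero => rfl
  | succ j =>
    by_cases hj : j < n
    · by_cases hjK : j = K
      · subst hjK
        simp [pathSeq, hj]
      · simp [pathSeq, hj, hjK, (eq_of_pathVertex_eq hj hK).mt hjK]
    · simp [pathSeq, hj, show j ≠ K by omega]

lemma sum_range_pathSeq_mul (a : ℤ) (x : ℕ → ℤ) (hn : 0 < n) :
    ∑ j ∈ range n, pathSeq π a x j * pathSeq π a x (j + 1) =
      (∑ i : Fin n, if h : 1 ≤ (i : ℕ) then x (π ⟨i - 1, by omega⟩) * x (π i) else 0) +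
        a * x (π ⟨0, hn⟩) := by
  obtain ⟨n, rfl⟩ : ∃ m, n = m + 1 := ⟨n - 1, by omega⟩
  rw [sum_range_succ', Fin.sum_univ_succ, sum_range, dif_neg (by simp)]
  congr 1
  rw [zero_add]
  refine sum_congr rfl fun i _ => ?_
  rw [dif_pos (by simp), pathSeq_succ_of_lt (by omega), pathSeq_succ_of_lt (by omega),
    pathVertex_of_lt (by omega), pathVertex_of_lt (by omega)]
  rfl

lemma pathSeq_last (a : ℤ) (x : ℕ → ℤ) (hn : 0 < n) :
    pathSeq π a x n = x (π ⟨n - 1, by omega⟩) := by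
  obtain ⟨n, rfl⟩ : ∃ m, n = m + 1 := ⟨n - 1, by omega⟩
  simp [pathSeq, pathVertex]

end path

lemma pathSeq_mem_Ico {n : ℕ} {π : Equiv.Perm (Fin n)} {P a : ℤ} {x : ℕ → ℤ} (hP : 0 < P)
    (ha : a ∈ Set.Ico 0 P) (hx : ∀ k, x k ∈ Set.Ico 0 P) (j : ℕ) :
    pathSeq π a x j ∈ Set.Ico 0 P := by
  cases j with
  | zero => exact ha
  | succ j =>
    simp only [pathSeq]
    split_ifs
    exacts [hx _, ⟨le_rfl, hP⟩]

lemma dvd_pathSeq_sub_iff {p m a₁ a₂ I J : ℕ} {n : ℕ} {π : Equiv.Perm (Fin n)} (ha₁ : a₁ < p)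
    (ha₂ : a₂ < p) (j : ℕ) :
    (p : ℤ) ∣ pathSeq π a₁ (digitVec p m I) j - pathSeq π a₂ (digitVec p m J) j ↔
      pathSeq π a₁ (digitVec p m I) j = pathSeq π a₂ (digitVec p m J) j :=
  dvd_sub_iff_eq
    (pathSeq_mem_Ico (by omega) ⟨by omega, by omega⟩ (digitVec_mem_Ico (by omega) m I) j)
    (pathSeq_mem_Ico (by omega) ⟨by omega, by omega⟩ (digitVec_mem_Ico (by omega) m J) j)

def Fpoly (p q n r : ℕ) (π : Equiv.Perm (Fin n)) (γ : Fin n → ℕ) (θ a β δ : ℕ) (x : ℕ → ℤ) :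
    ℤ :=
  ((q / p : ℕ) : ℤ) * (∑ j ∈ range n, pathSeq π a x j * pathSeq π a x (j + 1) +
      β * pathSeq π a x n + ∑ j ∈ range r, (dgt p r j δ : ℤ) * x (n + j)) +
    ∑ i : Fin n, (γ i : ℤ) * x i + θ

section Fpoly

variable {p q n r : ℕ} {π : Equiv.Perm (Fin n)} {γ : Fin n → ℕ} {θ δ : ℕ}

lemma Fpoly_congr {a β : ℕ} {x x' : ℕ → ℤ} (h : ∀ k < n + r, x k = x' k) :
    Fpoly p q n r π γ θ a β δ x = Fpoly p q n r π γ θ a β δ x' := by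
  have hpath := pathSeq_congr (π := π) (a := a) fun k hk => h k (by omega)
  have hδ : ∀ j ∈ range r, x (n + j) = x' (n + j) := fun j hj => h _ (by have := mem_range.mp hj; omega)
  have hγ : ∀ i : Fin n, x i = x' i := fun i => h _ (by omega)
  simp only [Fpoly, hpath, sum_congr rfl fun j hj => congrArg _ (hδ j hj), hγ]

lemma Fval_eq_Fpoly (hn : 2 ≤ n) (a β I : ℕ) :
    Fval p q n r hn π γ θ a β δ I = Fpoly p q n r π γ θ a β δ (digitVec p (n + r) I) := by
  rw [Fpoly_congr (x := digitVec p (n + r) I) (x' := fun k => dgt p (n + r) k I)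
    fun k hk => if_pos hk, Fval, Fpoly,
    sum_range_pathSeq_mul _ _ (by omega), pathSeq_last _ _ (by omega)]
  ring

lemma Fpoly_eq_add (a β : ℕ) (x : ℕ → ℤ) :
    Fpoly p q n r π γ θ a β δ x =
      Fpoly p q n r π γ θ a 0 δ x + (q / p : ℕ) * (β * pathSeq π a x n) := by
  simp only [Fpoly]
  push_cast
  ring

lemma Fpoly_update_sub_Fpoly_update {a₁ a₂ β K : ℕ} {x y : ℕ → ℤ} (hK : K < n)
    (h : ∀ j, K < j → j ≤ n → pathSeq π a₁ x j = pathSeq π a₂ y j) (c : ℤ) :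
    Fpoly p q n r π γ θ a₁ β δ (Function.update x (pathVertex π K) c) -
        Fpoly p q n r π γ θ a₂ β δ (Function.update y (pathVertex π K) c) =
      Fpoly p q n r π γ θ a₁ β δ x - Fpoly p q n r π γ θ a₂ β δ y +
        (q / p : ℕ) * ((c - x (pathVertex π K)) * (pathSeq π a₁ x K - pathSeq π a₂ y K)) := by
  have hxy : x (pathVertex π K) = y (pathVertex π K) := by
    simpa only [pathSeq_succ_of_lt hK] using h (K + 1) (by omega) (by omega)
  have hpath := sum_range_mul_succ_update_sub hK h c
  have hlast := update_sub_update_apply (h (K + 1) (by omega) (by omega)) c n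
  have hδ := sum_mul_update_sub_sum_mul_update hxy c (range r) (fun j => (dgt p r j δ : ℤ))
    (n + ·)
  have hγ := sum_mul_update_sub_sum_mul_update hxy c univ (fun i : Fin n => (γ i : ℤ))
    (fun i => (i : ℕ))
  rw [pathSeq_succ_of_lt hK] at hpath
  simp only [Fpoly, pathSeq_update hK]
  linear_combination (q / p : ℕ) * hpath + (q / p : ℕ) * β * hlast + (q / p : ℕ) * hδ + hγ

end Fpoly

def shiftPivot (p n r : ℕ) (π : Equiv.Perm (Fin n)) (a₁ a₂ t i : ℕ) : ℕ :=
  pivot n (pathSeq π a₁ (digitVec p (n + r) (i + t))) (pathSeq π a₂ (digitVec p (n + r) i))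

/-- `dgt` numbers digits from the most significant end, so the digit at position `k` of a number
below `p ^ m` is the coefficient of `p ^ (m - 1 - k)`. -/
def pivotExp (p n r : ℕ) (π : Equiv.Perm (Fin n)) (a₁ a₂ t i : ℕ) : ℕ :=
  n + r - 1 - pathVertex π (shiftPivot p n r π a₁ a₂ t i)

section shift

variable {p q n r : ℕ} {π : Equiv.Perm (Fin n)} {γ : Fin n → ℕ} {θ δ a₁ a₂ t i c : ℕ}

lemma shiftPivot_lt (hne : a₁ ≠ a₂)
    (hlast : pathSeq π a₁ (digitVec p (n + r) (i + t)) n =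
      pathSeq π a₂ (digitVec p (n + r) i) n) :
    shiftPivot p n r π a₁ a₂ t i < n :=
  pivot_lt (by simpa [pathSeq] using hne) hlast

lemma pathVertex_shiftPivot_lt (hK : shiftPivot p n r π a₁ a₂ t i < n) :
    pathVertex π (shiftPivot p n r π a₁ a₂ t i) < n + r :=
  (pathVertex_lt hK).trans_le (Nat.le_add_right n r)

lemma digitVec_pathVertex_shiftPivot (hK : shiftPivot p n r π a₁ a₂ t i < n) :
    digitVec p (n + r) (i + t) (pathVertex π (shiftPivot p n r π a₁ a₂ t i)) =
      digitVec p (n + r) i (pathVertex π (shiftPivot p n r π a₁ a₂ t i)) := by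
  have h : pathSeq π a₁ (digitVec p (n + r) (i + t)) (shiftPivot p n r π a₁ a₂ t i + 1) =
      pathSeq π a₂ (digitVec p (n + r) i) (shiftPivot p n r π a₁ a₂ t i + 1) :=
    eq_of_pivot_lt (Nat.lt_succ_self _) hK
  rwa [pathSeq_succ_of_lt hK, pathSeq_succ_of_lt hK] at h

lemma setDigit_pivotExp_add (hK : shiftPivot p n r π a₁ a₂ t i < n) :
    setDigit p (pivotExp p n r π a₁ a₂ t i) c i + t =
      setDigit p (pivotExp p n r π a₁ a₂ t i) c (i + t) := by
  refine (setDigit_add ?_).symm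
  simpa only [pivotExp, digitVec, if_pos (pathVertex_shiftPivot_lt hK), dgt, Nat.cast_inj] using
    digitVec_pathVertex_shiftPivot hK

lemma digitVec_setDigit_pivotExp (hp : 0 < p) (hc : c < p)
    (hK : shiftPivot p n r π a₁ a₂ t i < n) :
    digitVec p (n + r) (setDigit p (pivotExp p n r π a₁ a₂ t i) c i + t) =
        Function.update (digitVec p (n + r) (i + t))
          (pathVertex π (shiftPivot p n r π a₁ a₂ t i)) c ∧
      digitVec p (n + r) (setDigit p (pivotExp p n r π a₁ a₂ t i) c i) =
        Function.update (digitVec p (n + r) i) (pathVertex π (shiftPivot p n r π a₁ a₂ t i)) c := by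
  rw [setDigit_pivotExp_add hK]
  exact ⟨digitVec_setDigit hp hc (pathVertex_shiftPivot_lt hK),
    digitVec_setDigit hp hc (pathVertex_shiftPivot_lt hK)⟩

lemma shiftPivot_setDigit_pivotExp (hp : 0 < p) (hc : c < p)
    (hK : shiftPivot p n r π a₁ a₂ t i < n) :
    shiftPivot p n r π a₁ a₂ t (setDigit p (pivotExp p n r π a₁ a₂ t i) c i) =
      shiftPivot p n r π a₁ a₂ t i := by
  obtain ⟨hx, hy⟩ := digitVec_setDigit_pivotExp (c := c) hp hc hK
  rw [shiftPivot, hx, hy, pathSeq_update hK, pathSeq_update hK]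
  exact pivot_update hK c

lemma setDigit_pivotExp_add_lt (hp : 0 < p) (hc : c < p)
    (hK : shiftPivot p n r π a₁ a₂ t i < n) (hit : i + t < p ^ (n + r)) :
    setDigit p (pivotExp p n r π a₁ a₂ t i) c i + t < p ^ (n + r) := by
  rw [setDigit_pivotExp_add hK]
  exact setDigit_lt_pow hp hc hit (by have := pathVertex_shiftPivot_lt hK; unfold pivotExp; omega)

lemma pathSeq_setDigit_pivotExp (hp : 0 < p) (hc : c < p)
    (hK : shiftPivot p n r π a₁ a₂ t i < n)
    (hlast : pathSeq π a₁ (digitVec p (n + r) (i + t)) n =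
      pathSeq π a₂ (digitVec p (n + r) i) n) :
    pathSeq π a₁ (digitVec p (n + r) (setDigit p (pivotExp p n r π a₁ a₂ t i) c i + t)) n =
      pathSeq π a₂ (digitVec p (n + r) (setDigit p (pivotExp p n r π a₁ a₂ t i) c i)) n := by
  obtain ⟨hx, hy⟩ := digitVec_setDigit_pivotExp (c := c) hp hc hK
  rw [hx, hy, pathSeq_update hK, pathSeq_update hK, Function.update_apply, Function.update_apply]
  split_ifs
  exacts [rfl, hlast]

lemma sum_filter_zeta_Fpoly_sub_eq_zero (hq : q ≠ 0) (hpq : p ∣ q) (ha₁ : a₁ < p)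
    (ha₂ : a₂ < p) (hne : a₁ ≠ a₂) (t : ℕ) :
    ∑ i ∈ range (p ^ (n + r) - t) with
        pathSeq π a₁ (digitVec p (n + r) (i + t)) n = pathSeq π a₂ (digitVec p (n + r) i) n,
      zeta q (Fpoly p q n r π γ θ a₁ 0 δ (digitVec p (n + r) (i + t)) -
        Fpoly p q n r π γ θ a₂ 0 δ (digitVec p (n + r) i)) = 0 := by
  have hp : 0 < p := by omega
  set T := (range (p ^ (n + r) - t)).filter fun i =>
    pathSeq π a₁ (digitVec p (n + r) (i + t)) n = pathSeq π a₂ (digitVec p (n + r) i) n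
  have hK {i : ℕ} (hi : i ∈ T) : shiftPivot p n r π a₁ a₂ t i < n :=
    shiftPivot_lt hne (mem_filter.mp hi).2
  have hmem {i : ℕ} (hi : i ∈ T) {c : ℕ} (hc : c < p) :
      setDigit p (pivotExp p n r π a₁ a₂ t i) c i ∈ T := by
    obtain ⟨hit, hlast⟩ := mem_filter.mp hi
    have hlt := setDigit_pivotExp_add_lt hp hc (hK hi) (by rw [mem_range] at hit; omega)
    exact mem_filter.mpr ⟨mem_range.mpr (by omega), pathSeq_setDigit_pivotExp hp hc (hK hi) hlast⟩
  rw [sum_eq_sum_sum_setDigit hp T (pivotExp p n r π a₁ a₂ t) fun i hi c hc =>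
    ⟨hmem hi hc, congrArg (fun K => n + r - 1 - pathVertex π K)
      (shiftPivot_setDigit_pivotExp hp hc (hK hi))⟩]
  refine sum_eq_zero fun b hb => ?_
  obtain ⟨hbT, hb0⟩ := mem_filter.mp hb
  have hxb : digitVec p (n + r) (b + t) (pathVertex π (shiftPivot p n r π a₁ a₂ t b)) = 0 := by
    rw [digitVec_pathVertex_shiftPivot (hK hbT), digitVec,
      if_pos (pathVertex_shiftPivot_lt (hK hbT))]
    exact_mod_cast hb0
  have hE : ¬ (p : ℤ) ∣
      pathSeq π a₁ (digitVec p (n + r) (b + t)) (shiftPivot p n r π a₁ a₂ t b) -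
        pathSeq π a₂ (digitVec p (n + r) b) (shiftPivot p n r π a₁ a₂ t b) := by
    rw [dvd_pathSeq_sub_iff ha₁ ha₂]
    exact apply_pivot_ne (by simpa [pathSeq] using hne)
  rw [sum_congr rfl fun c hc => by
    obtain ⟨hx, hy⟩ := digitVec_setDigit_pivotExp (c := c) hp (mem_range.mp hc) (hK hbT)
    rw [hx, hy, Fpoly_update_sub_Fpoly_update (hK hbT) (fun j => eq_of_pivot_lt), hxb,
      sub_zero]]
  exact sum_range_zeta_add_mul_eq_zero hq hpq hE _

lemma sum_sum_zeta_Fval_shift_eq_zero (hq : q ≠ 0) (hpq : p ∣ q) (hn : 2 ≤ n)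
    (ha₁ : a₁ < p) (ha₂ : a₂ < p) (hne : a₁ ≠ a₂) (t : ℕ) :
    ∑ β ∈ range p, ∑ i ∈ range (p ^ (n + r) - t),
      zeta q (Fval p q n r hn π γ θ a₁ β δ (i + t)) *
        starRingEnd ℂ (zeta q (Fval p q n r hn π γ θ a₂ β δ i)) = 0 := by
  have hterm (β i : ℕ) :
      zeta q (Fval p q n r hn π γ θ a₁ β δ (i + t)) *
          starRingEnd ℂ (zeta q (Fval p q n r hn π γ θ a₂ β δ i)) =
        zeta q (Fpoly p q n r π γ θ a₁ 0 δ (digitVec p (n + r) (i + t)) -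
            Fpoly p q n r π γ θ a₂ 0 δ (digitVec p (n + r) i)) *
          zeta p (β * (pathSeq π a₁ (digitVec p (n + r) (i + t)) n -
            pathSeq π a₂ (digitVec p (n + r) i) n)) := by
    rw [conj_zeta, ← zeta_add, Fval_eq_Fpoly, Fval_eq_Fpoly, Fpoly_eq_add _ β,
      Fpoly_eq_add _ β, ← zeta_div_mul hq hpq, ← zeta_add]
    congr 1
    ring
  simp_rw [hterm]
  rw [sum_comm]
  simp_rw [← mul_sum, sum_range_zeta_mul (show p ≠ 0 by omega), dvd_pathSeq_sub_iff ha₁ ha₂,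
    mul_ite, mul_zero, ← sum_filter, ← sum_mul,
    sum_filter_zeta_Fpoly_sub_eq_zero hq hpq ha₁ ha₂ hne t, zero_mul]

end shift

theorem stmt_12_general (p q n r : ℕ) (hq : 0 < q) (hpq : p ∣ q) (hn : 2 ≤ n)
    (π : Equiv.Perm (Fin n)) (γ : Fin n → ℕ) (θ : ℕ)
    (αs αt : ℕ) (hαs : αs < p) (hαt : αt < p) (hne : αs ≠ αt)
    (δ : ℕ) (τ : ℤ) :
    ∑ β ∈ Finset.range p,
      accs (p ^ (n + r))
        (fun I => zeta q (Fval p q n r hn π γ θ αs β δ I))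
        (fun I => zeta q (Fval p q n r hn π γ θ αt β δ I)) τ = 0 := by
  rcases le_or_gt 0 τ with hτ | hτ
  · simp only [accs_of_nonneg _ _ _ hτ]
    exact sum_sum_zeta_Fval_shift_eq_zero hq.ne' hpq hn hαs hαt hne τ.toNat
  · rw [← neg_neg τ]
    simp only [accs_neg _ _ _ (neg_pos.mpr hτ), accs_of_nonneg _ _ _ (neg_pos.mpr hτ).le,
      ← map_sum, sum_sum_zeta_Fval_shift_eq_zero hq.ne' hpq hn hαt hαs hne.symm, map_zero]

/-- Completely uncorrelated codes (Remark 1 generalized): in the construction of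
Theorem 1, if `s = α^s p^r + δ` and `t = α^t p^r + δ` share the same `δ` and
`α^s ≠ α^t`, then for every shift `τ` with `|τ| < p^{n+r}` the aperiodic
cross-correlation sum `∑_{β<p} C_{χ(F_β^s), χ(F_β^t)}(τ)` vanishes. -/
theorem stmt_12 (p q n r : ℕ) (hp : 2 ≤ p) (hq : 0 < q) (hpq : p ∣ q) (hn : 2 ≤ n)
    (π : Equiv.Perm (Fin n)) (γ : Fin n → ℕ) (hγ : ∀ i, γ i < p) (θ : ℕ) (hθ : θ < q)
    (αs αt : ℕ) (hαs : αs < p) (hαt : αt < p) (hne : αs ≠ αt)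
    (δ : ℕ) (hδ : δ < p ^ r) (τ : ℤ) (hτ : |τ| < (p ^ (n + r) : ℤ)) :
    ∑ β ∈ Finset.range p,
      accs (p ^ (n + r))
        (fun I => zeta q (Fval p q n r hn π γ θ αs β δ I))
        (fun I => zeta q (Fval p q n r hn π γ θ αt β δ I)) τ = 0 :=
  stmt_12_general p q n r hq hpq hn π γ θ αs αt hαs hαt hne δ τ
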